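/- Let C ⊆ T(ℝ^d) be a subspace such that Δx ∈ C⊗T(ℝ^d) + T(ℝ^d)⊗C for every x ∈ C, where Δ is the deconcatenation coproduct (i.e. C is a coideal). Then the path variety 𝒱(C) is stable under concatenation: if X, Y ∈ 𝒱(C) then X ⊔ Y ∈ 𝒱(C). -/

import Mathlib

open scoped BigOperators TensorProduct

namespace PathVarieties

/-- Words over an alphabet `α`; the letters `{1,…,d}` of `ℝ^d` correspond to `α = Fin d`. -/
abbrev Word (α : Type*) := List α

/-- The tensor algebra `T(ℝ^d)`, identified with the free real vector space on words. -/
abbrev TA (α : Type*) := Word α →₀ ℝ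

/-- The list of all (riffle) shuffles of two words. -/
def shuffles {α : Type*} : Word α → Word α → List (Word α)
  | [], v => [v]
  | a :: u, [] => [a :: u]
  | a :: u, b :: v =>
      ((shuffles u (b :: v)).map (a :: ·)) ++ ((shuffles (a :: u) v).map (b :: ·))
termination_by u v => u.length + v.length
decreasing_by all_goals (simp only [List.length_cons]; omega)

/-- Shuffle product of two words, as an element of `T(ℝ^d)`. -/
noncomputable def shw {α : Type*} (u v : Word α) : TA α :=
  ((shuffles u v).map fun w => Finsupp.single w (1 : ℝ)).sum

/-- The shuffle product `⧢` on `T(ℝ^d)`, the bilinear extension of the shuffle of words. -/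
noncomputable def sh {α : Type*} (x y : TA α) : TA α :=
  x.sum fun u cu => y.sum fun v cv => (cu * cv) • shw u v

/-- Right halfshuffle `u ≻ v` of words (`v` nonempty): shuffle `u` with `v` minus its
last letter, then append the last letter of `v`.  (This is the unique bilinear operation
with `w ≻ a = wa` and `w ≻ (va) = (w≻v + v≻w)a`.) -/
noncomputable def rshw {α : Type*} (u v : Word α) : TA α :=
  ((shuffles u v.dropLast).map fun w =>
    Finsupp.single (w ++ v.drop (v.length - 1)) (1 : ℝ)).sum

/-- Right halfshuffle `≻` on `T^{≥1}(ℝ^d)`, extended bilinearly. -/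
noncomputable def rsh {α : Type*} (x y : TA α) : TA α :=
  x.sum fun u cu => y.sum fun v cv => (cu * cv) • rshw u v

/-- Left halfshuffle `u ≺ v` of words (`u` nonempty): the first letter of `u` followed by
the shuffle of the rest of `u` with `v`.  (This is the unique bilinear operation with
`a ≺ w = aw` and `(av) ≺ w = a(w≺v + v≺w)`.) -/
noncomputable def lshw {α : Type*} (u v : Word α) : TA α :=
  ((shuffles u.tail v).map fun w => Finsupp.single (u.take 1 ++ w) (1 : ℝ)).sum

/-- Left halfshuffle `≺` on `T^{≥1}(ℝ^d)`, extended bilinearly. -/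
noncomputable def lsh {α : Type*} (x y : TA α) : TA α :=
  x.sum fun u cu => y.sum fun v cv => (cu * cv) • lshw u v

/-- The antipode `𝒜`, with `𝒜(i₁⋯iₙ) = (−1)ⁿ iₙ⋯i₁`. -/
noncomputable def antipode {α : Type*} (x : TA α) : TA α :=
  x.sum fun w c => Finsupp.single w.reverse (((-1 : ℝ) ^ w.length) * c)

/-- Helper for `Λ_B`: value on a reversed word. -/
noncomputable def lamRev {α β : Type*} (B : α → TA β) : Word α → TA β
  | [] => Finsupp.single [] 1
  | [i] => B i
  | i :: w => rsh (lamRev B w) (B i)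

/-- `Λ_B` on a word: `Λ_B e = e`, `Λ_B i = B i`, `Λ_B (w·i) = (Λ_B w) ≻ (Λ_B i)`. -/
noncomputable def lamW {α β : Type*} (B : α → TA β) (w : Word α) : TA β :=
  lamRev B w.reverse

/-- The linear map `Λ_B : T(ℝ^t) → T(ℝ^d)` induced by `B` on letters. -/
noncomputable def Lam {α β : Type*} (B : α → TA β) (x : TA α) : TA β :=
  x.sum fun w c => c • lamW B w

/-- `splitEmb e j n w = Σ_{w = u₁⋯uₙ} e_j(u₁) ⧢ e_{j+1}(u₂) ⧢ ⋯ ⧢ e_{j+n−1}(uₙ)`,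
the sum over all splittings of `w` into `n` consecutive (possibly empty) factors,
each factor relabelled letterwise by `e`. -/
noncomputable def splitEmb {α β : Type*} (e : ℕ → α → β) : ℕ → ℕ → Word α → TA β
  | _, 0, w => if w.isEmpty then Finsupp.single ([] : Word β) (1 : ℝ) else 0
  | j, k + 1, w => ∑ m ∈ Finset.range (w.length + 1),
      sh (Finsupp.single ((w.take m).map (e j)) (1 : ℝ)) (splitEmb e (j + 1) k (w.drop m))

/-- `Σ_{x=uv} f(u)·v`: deconcatenate, evaluate the functional `f` on prefixes. -/
noncomputable def leftAct {α : Type*} (f : Word α → ℝ) (x : TA α) : TA α :=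
  x.sum fun w c => c • ∑ k ∈ Finset.range (w.length + 1),
    f (w.take k) • Finsupp.single (w.drop k) (1 : ℝ)

/-- `Σ_{x=uv} u·f(v)`: deconcatenate, evaluate the functional `f` on suffixes. -/
noncomputable def rightAct {α : Type*} (f : Word α → ℝ) (x : TA α) : TA α :=
  x.sum fun w c => c • ∑ k ∈ Finset.range (w.length + 1),
    f (w.drop k) • Finsupp.single (w.take k) (1 : ℝ)

/-- A raw path: a time horizon `T` together with a map `ℝ → ℝ^α`
(only the restriction to `[0,T]` is relevant). -/
structure RawPath (α : Type*) where
  T : ℝ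
  toFun : ℝ → α → ℝ

/-- A path: positive time horizon, continuous on `[0,T]` and piecewise continuously
differentiable there (witnessed by a partition `0 = τ₀ < τ₁ < ⋯ < τₙ = T`). -/
def IsPath {α : Type*} (X : RawPath α) : Prop :=
  0 < X.T ∧ (∀ i, ContinuousOn (fun t => X.toFun t i) (Set.Icc 0 X.T)) ∧
    ∃ (n : ℕ) (τ : Fin (n + 1) → ℝ), StrictMono τ ∧ τ 0 = 0 ∧ τ (Fin.last n) = X.T ∧
      ∀ (k : Fin n) (i : α), ContDiffOn ℝ 1 (fun t => X.toFun t i)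
        (Set.Icc (τ k.castSucc) (τ k.succ))

/-- Iterated integrals, by recursion on the reversed word:
`sigRev X (i :: w) t = ∫₀ᵗ ⟨σ(X)ₛ, w.reverse⟩ dX⁽ⁱ⁾(s)`. -/
noncomputable def sigRev {α : Type*} (X : ℝ → α → ℝ) : Word α → ℝ → ℝ
  | [], _ => 1
  | i :: w, t => ∫ s in (0 : ℝ)..t, sigRev X w s * deriv (fun u => X u i) s

/-- `⟨σ(X)_t, w⟩`, the iterated-integrals signature of `X` stopped at time `t`. -/
noncomputable def sigUpTo {α : Type*} (X : RawPath α) (t : ℝ) (w : Word α) : ℝ :=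
  sigRev X.toFun w.reverse t

/-- `⟨σ(X), w⟩`, the iterated-integrals signature of the path `X` at a word `w`. -/
noncomputable def sig {α : Type*} (X : RawPath α) (w : Word α) : ℝ :=
  sigUpTo X X.T w

/-- Pairing of a word-indexed functional with an element of `T(ℝ^d)`. -/
noncomputable def pairF {α : Type*} (f : Word α → ℝ) (x : TA α) : ℝ :=
  x.sum fun w c => c * f w

/-- `⟨σ(X), x⟩` for a tensor `x ∈ T(ℝ^d)` (linear in `x`). -/
noncomputable def pair {α : Type*} (X : RawPath α) (x : TA α) : ℝ :=
  Finsupp.linearCombination ℝ (sig X) x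

/-- The path variety `𝒱(W)` of all paths whose signature kills every element of `W`. -/
def V {α : Type*} (W : Set (TA α)) : Set (RawPath α) :=
  {X | IsPath X ∧ ∀ x ∈ W, pair X x = 0}

/-- `ℐ(M)`, the space of tensors killed by the signature of every path in `M`. -/
noncomputable def Idl {α : Type*} (M : Set (RawPath α)) : Submodule ℝ (TA α) :=
  ⨅ X ∈ M, LinearMap.ker (Finsupp.linearCombination ℝ (sig X))

/-- Concatenation `X ⊔ Y` of paths. -/
noncomputable def concat {α : Type*} (X Y : RawPath α) : RawPath α where
  T := X.T + Y.T
  toFun := fun t i =>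
    if t ≤ X.T then X.toFun t i else Y.toFun (t - X.T) i + X.toFun X.T i - Y.toFun 0 i

/-- Time reversal `⟵X`. -/
def timeRev {α : Type*} (X : RawPath α) : RawPath α :=
  ⟨X.T, fun t i => X.toFun (X.T - t) i⟩

/-- `concatIter X n = X^{⊔(n+1)}`. -/
noncomputable def concatIter {α : Type*} (X : RawPath α) : ℕ → RawPath α
  | 0 => X
  | n + 1 => concat (concatIter X n) X

/-- `X^{⊔n}`, the `n`-fold concatenation of `X` with itself (intended for `n ≥ 1`). -/
noncomputable def concatPow {α : Type*} (X : RawPath α) (n : ℕ) : RawPath α :=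
  concatIter X (n - 1)

/-- `concatFold f k = f 0 ⊔ f 1 ⊔ ⋯ ⊔ f k`. -/
noncomputable def concatFold {α : Type*} (f : ℕ → RawPath α) : ℕ → RawPath α
  | 0 => f 0
  | k + 1 => concat (concatFold f k) (f (k + 1))

/-- The deconcatenation coproduct `Δ : T(ℝ^d) → T(ℝ^d) ⊗ T(ℝ^d)`,
`Δw = Σ_{w=uv} u ⊗ v`. -/
noncomputable def deconc {α : Type*} (x : TA α) : TensorProduct ℝ (TA α) (TA α) :=
  x.sum fun w c => c • ∑ k ∈ Finset.range (w.length + 1),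
    (Finsupp.single (w.take k) (1 : ℝ)) ⊗ₜ[ℝ] (Finsupp.single (w.drop k) (1 : ℝ))

/-!
By Chen's identity, `x ↦ ⟨σ(X ⊔ Y), x⟩` is the functional `(σ(X) ⊗ σ(Y)) ∘ Δ`. If `σ(X)` and
`σ(Y)` kill `C`, then `σ(X) ⊗ σ(Y)` kills `C ⊗ T + T ⊗ C ⊇ Δ(C)`. Chen's identity itself follows
by induction on the word, splitting the outermost iterated integral at the junction time `X.T`.
-/

section PiecewiseSmooth

open MeasureTheory Set

variable {α : Type*}

def PiecewiseC1On (f : ℝ → α → ℝ) (a b : ℝ) : Prop :=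
  ∃ (n : ℕ) (τ : Fin (n + 1) → ℝ), StrictMono τ ∧ τ 0 = a ∧ τ (Fin.last n) = b ∧
    ∀ (k : Fin n) (i : α), ContDiffOn ℝ 1 (fun t => f t i) (Icc (τ k.castSucc) (τ k.succ))

lemma isPath_iff (X : RawPath α) :
    IsPath X ↔ 0 < X.T ∧ (∀ i, ContinuousOn (fun t => X.toFun t i) (Icc 0 X.T)) ∧
      PiecewiseC1On X.toFun 0 X.T :=
  Iff.rfl

namespace PiecewiseC1On

variable {f g : ℝ → α → ℝ} {a b c : ℝ}

lemma congr (h : PiecewiseC1On f a b)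
    (hfg : ∀ i, EqOn (fun t => f t i) (fun t => g t i) (Icc a b)) : PiecewiseC1On g a b := by
  obtain ⟨n, τ, hτ, hτ0, hτn, hC1⟩ := h
  refine ⟨n, τ, hτ, hτ0, hτn, fun k i => (hC1 k i).congr fun t ht => (hfg i ?_).symm⟩
  rw [← hτ0, ← hτn]
  exact ⟨(hτ.monotone (Fin.zero_le _)).trans ht.1, ht.2.trans (hτ.monotone (Fin.le_last _))⟩

lemma translate (h : PiecewiseC1On f a b) (c : ℝ) (d : α → ℝ) :
    PiecewiseC1On (fun t i => f (t - c) i + d i) (a + c) (b + c) := by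
  obtain ⟨n, τ, hτ, hτ0, hτn, hC1⟩ := h
  refine ⟨n, fun k => τ k + c, fun k l hkl => by simpa using hτ hkl, by simp [hτ0],
    by simp [hτn], fun k i => ?_⟩
  have hmaps : MapsTo (fun t => t - c) (Icc (τ k.castSucc + c) (τ k.succ + c))
      (Icc (τ k.castSucc) (τ k.succ)) := fun t ht => ⟨by linarith [ht.1], by linarith [ht.2]⟩
  exact ((hC1 k i).comp (contDiffOn_id.sub contDiffOn_const) hmaps).add contDiffOn_const

lemma append (h₁ : PiecewiseC1On f a b) (h₂ : PiecewiseC1On f b c) : PiecewiseC1On f a c := by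
  obtain ⟨n, τ, hτ, hτ0, hτn, hτC1⟩ := h₁
  obtain ⟨m, σ, hσ, hσ0, hσm, hσC1⟩ := h₂
  let ρ : Fin (n + m + 1) → ℝ := fun k =>
    if hk : (k : ℕ) ≤ n then τ ⟨k, by omega⟩ else σ ⟨k - n, by omega⟩
  have hρ_lo (k : Fin (n + m + 1)) (hk : (k : ℕ) ≤ n) : ρ k = τ ⟨k, by omega⟩ := dif_pos hk
  -- at the junction index `n` both descriptions give `b`
  have hρ_hi (k : Fin (n + m + 1)) (hk : n ≤ (k : ℕ)) : ρ k = σ ⟨k - n, by omega⟩ := by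
    by_cases hkn : (k : ℕ) ≤ n
    · have hk' : (k : ℕ) = n := le_antisymm hkn hk
      rw [hρ_lo k hkn, show (⟨k, _⟩ : Fin (n + 1)) = Fin.last n from Fin.ext hk', hτn, ← hσ0]
      exact congrArg σ (Fin.ext (by simp [hk']))
    · exact dif_neg hkn
  have hpiece (k : Fin (n + m)) :
      (∃ j : Fin n, ρ k.castSucc = τ j.castSucc ∧ ρ k.succ = τ j.succ) ∨
        ∃ j : Fin m, ρ k.castSucc = σ j.castSucc ∧ ρ k.succ = σ j.succ := by
    by_cases hk : (k : ℕ) < n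
    · exact .inl ⟨⟨k, hk⟩, hρ_lo _ (by simp; omega), hρ_lo _ (by simp; omega)⟩
    · refine .inr ⟨⟨k - n, by omega⟩, hρ_hi _ (by simp; omega), ?_⟩
      rw [hρ_hi _ (by simp; omega)]
      exact congrArg σ (Fin.ext (by simp; omega))
  refine ⟨n + m, ρ, Fin.strictMono_iff_lt_succ.2 fun k => ?_, ?_, ?_, fun k i => ?_⟩
  · rcases hpiece k with ⟨j, h₀, h₁⟩ | ⟨j, h₀, h₁⟩ <;> rw [h₀, h₁]
    exacts [hτ j.castSucc_lt_succ, hσ j.castSucc_lt_succ]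
  · rw [hρ_lo 0 (Nat.zero_le _), ← hτ0]
    rfl
  · rw [hρ_hi _ (by simp), ← hσm]
    exact congrArg σ (Fin.ext (by simp))
  · rcases hpiece k with ⟨j, h₀, h₁⟩ | ⟨j, h₀, h₁⟩ <;> rw [h₀, h₁]
    exacts [hτC1 j i, hσC1 j i]

lemma integrableOn_deriv (h : PiecewiseC1On f a b) (i : α) :
    IntegrableOn (deriv fun t => f t i) (Icc a b) := by
  obtain ⟨n, τ, hτ, rfl, rfl, hC1⟩ := h
  have hpiece (k : Fin n) :
      IntegrableOn (deriv fun t => f t i) (Icc (τ k.castSucc) (τ k.succ)) := by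
    have hlt := hτ k.castSucc_lt_succ
    have hcont := (hC1 k i).continuousOn_derivWithin (uniqueDiffOn_Icc hlt) le_rfl
    rw [integrableOn_Icc_iff_integrableOn_Ioo]
    refine (hcont.integrableOn_Icc.mono_set Ioo_subset_Icc_self).congr_fun
      (fun t ht => ?_) measurableSet_Ioo
    exact derivWithin_of_mem_nhds (Icc_mem_nhds ht.1 ht.2)
  suffices ∀ k : Fin (n + 1), IntegrableOn (deriv fun t => f t i) (Icc (τ 0) (τ k)) from
    this (Fin.last n)
  intro k
  induction k using Fin.induction with
  | zero => simp
  | succ k ih =>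
    rw [← Icc_union_Icc_eq_Icc (hτ.monotone (Fin.zero_le _)) (hτ k.castSucc_lt_succ).le]
    exact ih.union (hpiece k)

end PiecewiseC1On

end PiecewiseSmooth

section Paths

open MeasureTheory Set

variable {α : Type*} {X Y : RawPath α}

lemma concat_toFun_of_le {t : ℝ} (ht : t ≤ X.T) (i : α) :
    (concat X Y).toFun t i = X.toFun t i :=
  if_pos ht

lemma concat_toFun_of_ge {t : ℝ} (ht : X.T ≤ t) (i : α) :
    (concat X Y).toFun t i = Y.toFun (t - X.T) i + (X.toFun X.T i - Y.toFun 0 i) := by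
  rcases ht.eq_or_lt with rfl | hlt
  · simp [concat_toFun_of_le le_rfl]
  · exact (if_neg hlt.not_ge).trans (add_sub_assoc _ _ _)

lemma isPath_concat (hX : IsPath X) (hY : IsPath Y) : IsPath (concat X Y) := by
  rw [isPath_iff] at hX hY ⊢
  obtain ⟨hXT, hXcont, hXC1⟩ := hX
  obtain ⟨hYT, hYcont, hYC1⟩ := hY
  have hsplit : Icc 0 X.T ∪ Icc X.T (X.T + Y.T) = Icc 0 (X.T + Y.T) :=
    Icc_union_Icc_eq_Icc hXT.le (le_add_of_nonneg_right hYT.le)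
  have hleft (i : α) : EqOn (fun t => X.toFun t i) (fun t => (concat X Y).toFun t i)
      (Icc 0 X.T) := fun t ht => (concat_toFun_of_le ht.2 i).symm
  have hright (i : α) : EqOn (fun t => Y.toFun (t - X.T) i + (X.toFun X.T i - Y.toFun 0 i))
      (fun t => (concat X Y).toFun t i) (Icc X.T (X.T + Y.T)) :=
    fun t ht => (concat_toFun_of_ge ht.1 i).symm
  refine ⟨add_pos hXT hYT, fun i => ?_, ?_⟩
  · have hYcont' : ContinuousOn (fun t => Y.toFun (t - X.T) i + (X.toFun X.T i - Y.toFun 0 i))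
        (Icc X.T (X.T + Y.T)) := by
      refine ((hYcont i).comp (continuous_sub_right X.T).continuousOn fun t ht => ?_).add
        continuousOn_const
      exact ⟨sub_nonneg.2 ht.1, sub_le_iff_le_add.2 (by linarith [ht.2])⟩
    show ContinuousOn _ (Icc 0 (X.T + Y.T))
    rw [← hsplit]
    exact ((hXcont i).congr (hleft i).symm).union_of_isClosed
      (hYcont'.congr (hright i).symm) isClosed_Icc isClosed_Icc
  · have hYC1' := hYC1.translate X.T fun i => X.toFun X.T i - Y.toFun 0 i
    rw [zero_add, add_comm Y.T] at hYC1'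
    exact (hXC1.congr hleft).append (hYC1'.congr hright)

lemma IsPath.integrableOn_deriv (hX : IsPath X) (i : α) :
    IntegrableOn (deriv fun t => X.toFun t i) (Icc 0 X.T) :=
  ((isPath_iff X).1 hX).2.2.integrableOn_deriv i

lemma IsPath.continuousOn_sigRev (hX : IsPath X) (w : Word α) :
    ContinuousOn (sigRev X.toFun w) (Icc 0 X.T) := by
  induction w with
  | nil => exact continuousOn_const
  | cons i w ih =>
    have hint : IntervalIntegrable (fun s => sigRev X.toFun w s * deriv (fun u => X.toFun u i) s)
        volume 0 X.T := (intervalIntegrable_iff_integrableOn_Icc_of_le hX.1.le).2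
      ((hX.integrableOn_deriv i).continuousOn_mul ih isCompact_Icc)
    have hprim := intervalIntegral.continuousOn_primitive_interval' hint left_mem_uIcc
    rwa [uIcc_of_le hX.1.le] at hprim

lemma IsPath.intervalIntegrable_sigRev_mul_deriv (hX : IsPath X) (w : Word α) (i : α)
    {a b : ℝ} (ha : a ∈ Icc 0 X.T) (hb : b ∈ Icc 0 X.T) :
    IntervalIntegrable (fun s => sigRev X.toFun w s * deriv (fun u => X.toFun u i) s) volume a b :=
  (((hX.integrableOn_deriv i).continuousOn_mul (hX.continuousOn_sigRev w) isCompact_Icc).mono_set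
    (uIcc_subset_Icc ha hb)).intervalIntegrable

end Paths

section Chen

open MeasureTheory Set

variable {α : Type*} {X Y : RawPath α}

lemma deriv_concat_of_lt {s : ℝ} (hs : s < X.T) (i : α) :
    deriv (fun u => (concat X Y).toFun u i) s = deriv (fun u => X.toFun u i) s :=
  Filter.EventuallyEq.deriv_eq <| by
    filter_upwards [Iio_mem_nhds hs] with u hu using concat_toFun_of_le hu.le i

lemma deriv_concat_of_gt {s : ℝ} (hs : X.T < s) (i : α) :
    deriv (fun u => (concat X Y).toFun u i) s = deriv (fun u => Y.toFun u i) (s - X.T) := by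
  have hevent : (fun u => (concat X Y).toFun u i) =ᶠ[nhds s]
      fun u => Y.toFun (u - X.T) i + (X.toFun X.T i - Y.toFun 0 i) := by
    filter_upwards [Ioi_mem_nhds hs] with u hu using concat_toFun_of_ge hu.le i
  rw [hevent.deriv_eq, deriv_add_const]
  exact deriv_comp_sub_const (fun u => Y.toFun u i) X.T s

lemma sigRev_concat_of_le (w : Word α) {t : ℝ} (ht : t ∈ Icc 0 X.T) :
    sigRev (concat X Y).toFun w t = sigRev X.toFun w t := by
  induction w generalizing t with
  | nil => rfl
  | cons i w ih =>
    refine intervalIntegral.integral_congr_ae ?_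
    filter_upwards [Measure.ae_ne volume X.T] with s hsT hs
    rw [uIoc_of_le ht.1] at hs
    have hslt : s < X.T := lt_of_le_of_ne (hs.2.trans ht.2) hsT
    rw [ih ⟨hs.1.le, hslt.le⟩, deriv_concat_of_lt hslt]

lemma integral_mul_deriv_concat_of_ge (g : ℝ → ℝ) (i : α) {t : ℝ} (ht : X.T ≤ t) :
    ∫ s in X.T..t, g s * deriv (fun u => (concat X Y).toFun u i) s
      = ∫ s in 0..t - X.T, g (s + X.T) * deriv (fun u => Y.toFun u i) s := by
  have hshift := intervalIntegral.integral_comp_sub_right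
    (fun s => g (s + X.T) * deriv (fun u => Y.toFun u i) s) X.T (a := X.T) (b := t)
  rw [sub_self] at hshift
  rw [← hshift]
  refine intervalIntegral.integral_congr_ae (Filter.Eventually.of_forall fun s hs => ?_)
  rw [uIoc_of_le ht] at hs
  rw [deriv_concat_of_gt hs.1, sub_add_cancel]

lemma sigRev_concat_of_ge (hX : IsPath X) (hY : IsPath Y) (w : Word α) {t : ℝ}
    (ht : t ∈ Icc X.T (X.T + Y.T)) :
    sigRev (concat X Y).toFun w t = ∑ k ∈ Finset.range (w.length + 1),
      sigRev Y.toFun (w.take k) (t - X.T) * sigRev X.toFun (w.drop k) X.T := by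
  induction w generalizing t with
  | nil => simp [sigRev]
  | cons i w ih =>
    have hZ := isPath_concat hX hY
    have hXT : X.T ∈ Icc 0 (concat X Y).T := ⟨hX.1.le, le_add_of_nonneg_right hY.1.le⟩
    have htZ : t ∈ Icc 0 (concat X Y).T := ⟨hX.1.le.trans ht.1, ht.2⟩
    have htY : t - X.T ∈ Icc 0 Y.T := ⟨sub_nonneg.2 ht.1, by linarith [ht.2]⟩
    have hsplit := intervalIntegral.integral_add_adjacent_intervals
      (hZ.intervalIntegrable_sigRev_mul_deriv w i ⟨le_rfl, hXT.1.trans hXT.2⟩ hXT)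
      (hZ.intervalIntegrable_sigRev_mul_deriv w i hXT htZ)
    have hleft : ∫ s in 0..X.T,
          sigRev (concat X Y).toFun w s * deriv (fun u => (concat X Y).toFun u i) s
        = sigRev X.toFun (i :: w) X.T :=
      sigRev_concat_of_le (i :: w) ⟨hX.1.le, le_rfl⟩
    have hright : ∫ s in X.T..t,
          sigRev (concat X Y).toFun w s * deriv (fun u => (concat X Y).toFun u i) s
        = ∑ k ∈ Finset.range (w.length + 1),
            sigRev Y.toFun (i :: w.take k) (t - X.T) * sigRev X.toFun (w.drop k) X.T := by
      rw [integral_mul_deriv_concat_of_ge _ i ht.1]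
      calc _ = ∫ s in 0..t - X.T, ∑ k ∈ Finset.range (w.length + 1),
              sigRev Y.toFun (w.take k) s * deriv (fun u => Y.toFun u i) s *
                sigRev X.toFun (w.drop k) X.T := by
            refine intervalIntegral.integral_congr fun s hs => ?_
            rw [uIcc_of_le htY.1] at hs
            rw [ih ⟨le_add_of_nonneg_left hs.1, by linarith [hs.2, ht.2]⟩, add_sub_cancel_right,
              Finset.sum_mul]
            simp only [mul_right_comm]
        _ = _ := by
            rw [intervalIntegral.integral_finsetSum fun k _ =>
              (hY.intervalIntegrable_sigRev_mul_deriv _ i ⟨le_rfl, hY.1.le⟩ htY).mul_const _]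
            simp only [intervalIntegral.integral_mul_const]
            rfl
    have hunfold : sigRev (concat X Y).toFun (i :: w) t = ∫ s in 0..t,
        sigRev (concat X Y).toFun w s * deriv (fun u => (concat X Y).toFun u i) s := rfl
    rw [hunfold, ← hsplit, hleft, hright,
      List.length_cons, Finset.sum_range_succ' _ (w.length + 1)]
    simp [sigRev, add_comm]

lemma sig_concat (hX : IsPath X) (hY : IsPath Y) (w : Word α) :
    sig (concat X Y) w = ∑ k ∈ Finset.range (w.length + 1),
      sig X (w.take k) * sig Y (w.drop k) := by
  have hT : X.T + Y.T ∈ Icc X.T (X.T + Y.T) := ⟨le_add_of_nonneg_right hY.1.le, le_rfl⟩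
  change sigRev (concat X Y).toFun w.reverse (X.T + Y.T) = _
  rw [sigRev_concat_of_ge hX hY w.reverse hT, add_sub_cancel_left,
    List.length_reverse, ← Finset.sum_range_reflect]
  refine Finset.sum_congr rfl fun k hk => ?_
  have hkw : k ≤ w.length := Nat.lt_succ_iff.1 (Finset.mem_range.1 hk)
  rw [List.take_reverse, List.drop_reverse, mul_comm, Nat.add_sub_cancel,
    Nat.sub_sub_self hkw]
  rfl

end Chen

section Coideal

open TensorProduct LinearMap

variable {R M N : Type*} [CommSemiring R] [AddCommMonoid M] [Module R M] [AddCommMonoid N]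
  [Module R N]

lemma map₂_mk_sup_map₂_mk_le_ker {f : M →ₗ[R] R} {g : N →ₗ[R] R} {C : Submodule R M}
    {D : Submodule R N} (hf : C ≤ ker f) (hg : D ≤ ker g) :
    Submodule.map₂ (mk R M N) C ⊤ ⊔ Submodule.map₂ (mk R M N) ⊤ D ≤
      ker (mul' R R ∘ₗ map f g) := by
  refine sup_le (Submodule.map₂_le.2 fun u hu v _ => ?_) (Submodule.map₂_le.2 fun u _ v hv => ?_)
  · simp [mem_ker.1 (hf hu)]
  · simp [mem_ker.1 (hg hv)]

end Coideal

section Deconcatenation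

variable {α : Type*}

lemma mul'_map_deconc (f g : Word α → ℝ) (x : TA α) :
    LinearMap.mul' ℝ ℝ (TensorProduct.map (Finsupp.linearCombination ℝ f)
        (Finsupp.linearCombination ℝ g) (deconc x))
      = Finsupp.linearCombination ℝ
          (fun w => ∑ k ∈ Finset.range (w.length + 1), f (w.take k) * g (w.drop k)) x := by
  simp [deconc, map_finsuppSum, Finsupp.linearCombination_apply, Finset.mul_sum]

lemma pair_concat {X Y : RawPath α} (hX : IsPath X) (hY : IsPath Y) (x : TA α) :
    pair (concat X Y) x = LinearMap.mul' ℝ ℝ (TensorProduct.map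
      (Finsupp.linearCombination ℝ (sig X)) (Finsupp.linearCombination ℝ (sig Y)) (deconc x)) := by
  rw [mul'_map_deconc]
  exact congrArg (fun f => Finsupp.linearCombination ℝ f x) (funext (sig_concat hX hY))

end Deconcatenation

/-- If `C ⊆ T(ℝ^d)` is a coideal of the deconcatenation coproduct
(`Δx ∈ C⊗T + T⊗C` for all `x ∈ C`), then the path variety `𝒱(C)` is stable under
concatenation. -/
theorem statement15 {d : ℕ} (C : Submodule ℝ (TA (Fin d)))
    (hC : ∀ x ∈ C, deconc x ∈
      Submodule.map₂ (TensorProduct.mk ℝ (TA (Fin d)) (TA (Fin d))) C ⊤ ⊔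
      Submodule.map₂ (TensorProduct.mk ℝ (TA (Fin d)) (TA (Fin d))) ⊤ C) :
    ∀ X Y : RawPath (Fin d),
      X ∈ V (C : Set (TA (Fin d))) → Y ∈ V (C : Set (TA (Fin d))) →
        concat X Y ∈ V (C : Set (TA (Fin d))) := by
  rintro X Y ⟨hX, hXC⟩ ⟨hY, hYC⟩
  refine ⟨isPath_concat hX hY, fun x hx => ?_⟩
  rw [pair_concat hX hY]
  exact LinearMap.mem_ker.1 <| map₂_mk_sup_map₂_mk_le_ker
    (fun u hu => LinearMap.mem_ker.2 (hXC u hu)) (fun v hv => LinearMap.mem_ker.2 (hYC v hv))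
    (hC x hx)

end PathVarieties
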